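/- Let X be a complex separable infinite-dimensional Banach space and let T be a bounded linear operator on X which has a perfectly spanning set of eigenvectors associated to unimodular eigenvalues. Then T satisfies assumption (H): there exists a sequence (x_n)_{n≥1} of eigenvectors of T with T x_n = λ_n x_n, |λ_n| = 1, λ_n = e^{2iπθ_n} with θ_n ∈ (0,1], ‖x_n‖ = 1, such that: (1) whenever (λ_{n_1},…,λ_{n_k}) is a finite family of distinct elements of {λ_n : n ≥ 1}, the family (θ_{n_1},…,θ_{n_k}) consists of ℚ-linearly independent irrational numbers; (2) the linear span of {x_n : n ≥ 1} is dense in X; (3) for any finite subset F of σ_p(T)∩𝕋, the closure of {x_n : n ≥ 1} equals the closure of {x_n : n ∈ A_F}, where A_F = {k ≥ 1 : λ_k ∉ F}. -/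

import Mathlib

open MeasureTheory Filter Topology

open scoped Classical in
/-- Lower density of a set of natural numbers. -/
noncomputable def lowerDensity (A : Set ℕ) : ℝ :=
  Filter.atTop.liminf fun N : ℕ =>
    (((Finset.range N).filter (fun n => n ∈ A)).card : ℝ) / (N : ℝ)

/-- `x` is a frequently hypercyclic vector for `T`. -/
def FreqHCVector {X : Type*} [NormedAddCommGroup X] [NormedSpace ℂ X]
    (T : X →L[ℂ] X) (x : X) : Prop :=
  ∀ U : Set X, IsOpen U → U.Nonempty → 0 < lowerDensity {n : ℕ | (T ^ n) x ∈ U}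

/-- `T` is frequently hypercyclic. -/
def FrequentlyHypercyclic {X : Type*} [NormedAddCommGroup X] [NormedSpace ℂ X]
    (T : X →L[ℂ] X) : Prop :=
  ∃ x : X, FreqHCVector T x

/-- `T` is hypercyclic. -/
def Hypercyclic {X : Type*} [NormedAddCommGroup X] [NormedSpace ℂ X]
    (T : X →L[ℂ] X) : Prop :=
  ∃ x : X, Dense (Set.range fun n : ℕ => (T ^ n) x)

/-- `T` has a perfectly spanning set of eigenvectors associated to unimodular
eigenvalues: there is a continuous (atomless) probability measure `σ` on the unit
circle such that whenever `A` is a measurable subset of the circle with `σ A = 1`,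
the span of the eigenspaces `ker (T - c)`, `c ∈ A`, is dense in `X`. -/
def PerfectlySpanning {X : Type*} [NormedAddCommGroup X] [NormedSpace ℂ X]
    (T : X →L[ℂ] X) : Prop :=
  ∃ σ : Measure ℂ, IsProbabilityMeasure σ ∧ (∀ c : ℂ, σ {c} = 0) ∧
    σ {c : ℂ | ‖c‖ = 1} = 1 ∧
    ∀ A : Set ℂ, A ⊆ {c : ℂ | ‖c‖ = 1} → MeasurableSet A → σ A = 1 →
      Dense (Submodule.span ℂ (⋃ c ∈ A, {x : X | T x = c • x}) : Set X)


/-!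
Call an eigenvalue `c` good if every unit eigenvector for `c` is approximated by unit
eigenvectors whose eigenvalues form a set of positive `σ`-measure. By separability, `σ`-almost
every eigenvalue is good, so the good eigenvectors still span a dense subspace; and since `σ` has
no atoms, near any good eigenvector the eigenvalues available form an uncountable set. A span over
`ℚ` of finitely many reals is countable, so, running through a countable basis with every basic
set visited infinitely often, one can pick in each basic set a good eigenvector whose argument is
`ℚ`-independent of `1` and of all arguments chosen before. The sequence obtained accumulates at
every good eigenvector, in particular at each of its own terms, which gives (2) and (3).
-/

open Set Submodule

noncomputable def turns (c : ℂ) : ℝ := toIocMod one_pos 0 (c.arg / (2 * Real.pi))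

theorem turns_mem_Ioc (c : ℂ) : turns c ∈ Ioc (0 : ℝ) 1 := by
  have := toIocMod_mem_Ioc one_pos 0 (c.arg / (2 * Real.pi))
  rwa [zero_add] at this

theorem exp_turns {c : ℂ} (hc : ‖c‖ = 1) :
    Complex.exp ((2 * Real.pi * turns c : ℝ) * Complex.I) = c := by
  set k := toIocDiv one_pos 0 (c.arg / (2 * Real.pi))
  have hk : turns c = c.arg / (2 * Real.pi) - k := by
    have := self_sub_toIocMod one_pos 0 (c.arg / (2 * Real.pi))
    rw [zsmul_one] at this
    unfold turns
    linarith
  rw [hk, mul_sub, mul_div_cancel₀ _ Real.two_pi_pos.ne']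
  push_cast
  rw [sub_mul, Complex.exp_sub, mul_comm (2 * (Real.pi : ℂ)), mul_assoc,
    Complex.exp_int_mul_two_pi_mul_I, div_one]
  simpa [hc] using Complex.norm_mul_exp_arg_mul_I c

theorem not_countable_image_turns {s : Set ℂ} (hs : s ⊆ {c | ‖c‖ = 1}) (h : ¬ s.Countable) :
    ¬ (turns '' s).Countable := fun hc =>
  h <| (hc.image fun θ : ℝ => Complex.exp ((2 * Real.pi * θ : ℝ) * Complex.I)).mono
    fun c hcs => (mem_image _ _ _).2 ⟨turns c, mem_image_of_mem turns hcs, exp_turns (hs hcs)⟩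

theorem Submodule.countable_span {K V : Type*} [Semiring K] [Countable K] [AddCommMonoid V]
    [Module K V] {s : Set V} (hs : s.Countable) : (span K s : Set V).Countable := by
  have := hs.to_subtype
  have : Countable (span K (range ((↑) : s → V))) := inferInstance
  rw [Subtype.range_coe] at this
  exact countable_coe_iff.mp this

theorem linearIndependent_of_notMem_span_image_Iio {K V : Type*} [DivisionRing K]
    [AddCommGroup V] [Module K V] {t : ℕ → V} (h : ∀ n, t n ∉ span K (t '' Iio n)) :
    LinearIndependent K t := by
  have hIio : ∀ n, LinearIndepOn K t (Iio n) := by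
    intro n
    induction n with
    | zero => simp
    | succ n ih =>
      rw [Iio_add_one_eq_Iic, ← Iio_insert, linearIndepOn_insert self_notMem_Iio]
      exact ⟨ih, h n⟩
  rw [← linearIndepOn_univ_iff, ← iUnion_Iio]
  exact linearIndepOn_iUnion_of_directed monotone_Iio.directed_le hIio

theorem exists_seq_mem_notMem_span {K V : Type*} [DivisionRing K] [Countable K]
    [AddCommGroup V] [Module K V] (v : V) {L : ℕ → Set V} (hL : ∀ n, ¬ (L n).Countable) :
    ∃ t : ℕ → V, ∀ n, t n ∈ L n ∧ t n ∉ span K (insert v (t '' Iio n)) := by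
  have hfresh : ∀ n (s : Set V), s.Finite → ∃ a ∈ L n, a ∉ span K (insert v s) := by
    intro n s hs
    by_contra! h
    exact hL n ((countable_span (K := K) (hs.insert v).countable).mono h)
  choose! next hnextL hnext using hfresh
  let t : ℕ → V := Nat.strongRec fun n prev => next n (range fun m : Fin n => prev m m.2)
  have hrange : ∀ n, (range fun m : Fin n => t m) = t '' Iio n := fun n => by
    rw [← Fin.range_val, ← range_comp]; rfl
  refine ⟨t, fun n => ?_⟩
  rw [show t n = next n (t '' Iio n) by rw [← hrange]; exact Nat.strongRec_eq _ n]
  exact ⟨hnextL n _ ((finite_Iio n).image t), hnext n _ ((finite_Iio n).image t)⟩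

theorem irrational_of_notMem_span_one {x : ℝ} (hx : x ∉ span ℚ {(1 : ℝ)}) : Irrational x :=
  fun ⟨q, hq⟩ => hx (mem_span_singleton.2 ⟨q, by rw [Rat.smul_one_eq_cast, hq]⟩)

theorem exists_seq_isOpen_frequently_subset {Y : Type*} [TopologicalSpace Y]
    [SecondCountableTopology Y] {D : Set Y} (hD : D.Nonempty) :
    ∃ O : ℕ → Set Y, (∀ n, IsOpen (O n) ∧ (O n ∩ D).Nonempty) ∧
      ∀ d ∈ D, ∀ U ∈ 𝓝 d, ∃ᶠ n in atTop, O n ⊆ U := by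
  obtain ⟨b, hbc, -, hb⟩ := TopologicalSpace.exists_countable_basis Y
  obtain ⟨d, hd⟩ := hD
  obtain ⟨o, hob, hdo, -⟩ := hb.mem_nhds_iff.1 (univ_mem (f := 𝓝 d))
  obtain ⟨f, hf⟩ := (hbc.mono (sep_subset b fun o => (o ∩ D).Nonempty)).exists_eq_range
    ⟨o, hob, d, hdo, hd⟩
  have hfb : ∀ i, f i ∈ b ∧ (f i ∩ D).Nonempty := fun i => hf.symm.subset (mem_range_self i)
  -- indexing by `n.unpair.1` lists every basic set infinitely often
  refine ⟨fun n => f n.unpair.1, fun n => ⟨hb.isOpen (hfb _).1, (hfb _).2⟩, ?_⟩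
  intro d hd U hU
  obtain ⟨o, hob, hdo, hoU⟩ := hb.mem_nhds_iff.1 hU
  obtain ⟨i, rfl⟩ : o ∈ range f := hf ▸ ⟨hob, d, hdo, hd⟩
  refine frequently_atTop.2 fun a => ⟨Nat.pair i a, Nat.right_le_pair i a, ?_⟩
  simpa only [Nat.unpair_pair] using hoU

theorem exists_seq_mapClusterPt_linearIndependent {Y : Type*} [TopologicalSpace Y]
    [SecondCountableTopology Y] {D : Set Y} (hD : D.Nonempty) (θ : Y → ℝ)
    (h : ∀ d ∈ D, ∀ U ∈ 𝓝 d, ¬ (θ '' (U ∩ D)).Countable) :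
    ∃ y : ℕ → Y, (∀ n, y n ∈ D) ∧ (∀ d ∈ D, MapClusterPt d atTop y) ∧
      (∀ n, Irrational (θ (y n))) ∧ LinearIndependent ℚ (θ ∘ y) := by
  obtain ⟨O, hO, hOD⟩ := exists_seq_isOpen_frequently_subset hD
  have hL : ∀ n, ¬ (θ '' (O n ∩ D)).Countable := fun n => by
    obtain ⟨d, hdO, hdD⟩ := (hO n).2
    exact h d hdD (O n) ((hO n).1.mem_nhds hdO)
  obtain ⟨t, ht⟩ := exists_seq_mem_notMem_span (K := ℚ) 1 hL
  choose y hy hyt using fun n => (ht n).1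
  refine ⟨y, fun n => (hy n).2, fun d hd => ?_, fun n => ?_, ?_⟩
  · exact mapClusterPt_iff_frequently.2 fun U hU =>
      (hOD d hd U hU).mono fun n hn => hn (hy n).1
  · rw [hyt]
    exact irrational_of_notMem_span_one fun h1 =>
      (ht n).2 (span_mono (singleton_subset_iff.2 (mem_insert 1 _)) h1)
  · rw [show θ ∘ y = t from funext hyt]
    exact linearIndependent_of_notMem_span_image_Iio fun n h1 =>
      (ht n).2 (span_mono (subset_insert 1 _) h1)

theorem closure_range_eq_closure_image_compl {α : Type*} [TopologicalSpace α] {x : ℕ → α}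
    (hx : ∀ n, MapClusterPt (x n) atTop x) {K : Set ℕ} (hK : K.Finite) :
    closure (range x) = closure (x '' Kᶜ) := by
  refine (closure_minimal (range_subset_iff.2 fun n => ?_) isClosed_closure).antisymm
    (closure_mono (image_subset_range x _))
  refine mem_closure_iff_nhds.2 fun U hU => ?_
  obtain ⟨k, hkU, hkK⟩ := ((mapClusterPt_iff_frequently.1 (hx n) U hU).and_eventually
    (Nat.cofinite_eq_atTop ▸ hK.eventually_cofinite_notMem)).exists
  exact ⟨x k, hkU, k, hkK, rfl⟩

theorem dense_span_of_subset_closure {R M : Type*} [Semiring R] [TopologicalSpace M]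
    [AddCommMonoid M] [Module R M] [ContinuousAdd M] [ContinuousConstSMul R M] {s t : Set M}
    (hs : Dense (span R s : Set M)) (hst : s ⊆ closure t) : Dense (span R t : Set M) := by
  have : span R s ≤ (span R t).topologicalClosure :=
    span_le.2 (hst.trans (closure_mono subset_span))
  rw [← dense_closure, ← (span R t).topologicalClosure_coe]
  exact hs.mono this

theorem ae_forall_measure_image_ne_zero {Y Ω : Type*} [TopologicalSpace Y]
    [SecondCountableTopology Y] [MeasurableSpace Ω] (μ : Measure Ω) (S : Set Y) (π : Y → Ω) :
    ∀ᵐ ω ∂μ, ∀ y ∈ S, π y = ω → ∀ U ∈ 𝓝 y, μ (π '' (U ∩ S)) ≠ 0 := by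
  obtain ⟨b, hbc, -, hb⟩ := TopologicalSpace.exists_countable_basis Y
  have hnull : μ (⋃ o ∈ {o ∈ b | μ (π '' (o ∩ S)) = 0}, π '' (o ∩ S)) = 0 :=
    (measure_biUnion_null_iff (hbc.mono (sep_subset _ _))).2 fun o ho => ho.2
  refine ae_iff.2 (measure_mono_null (fun ω hω => ?_) hnull)
  simp only [mem_ofPred_eq, not_forall, not_not] at hω
  obtain ⟨y, hyS, rfl, U, hU, hU0⟩ := hω
  obtain ⟨o, hob, hyo, hoU⟩ := hb.mem_nhds_iff.1 hU
  exact mem_biUnion ⟨hob, measure_mono_null (image_mono (inter_subset_inter_left S hoU)) hU0⟩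
    (mem_image_of_mem π ⟨hyo, hyS⟩)

section UnitEigenpairs

variable {X : Type*} [NormedAddCommGroup X] [NormedSpace ℂ X]

def unitEigenpairs (T : X →L[ℂ] X) : Set (X × ℂ) :=
  {p | ‖p.1‖ = 1 ∧ ‖p.2‖ = 1 ∧ T p.1 = p.2 • p.1}

theorem PerfectlySpanning.exists_subset_unitEigenpairs [TopologicalSpace.SeparableSpace X]
    {T : X →L[ℂ] X} (hT : PerfectlySpanning T) :
    ∃ D ⊆ unitEigenpairs T, Dense (span ℂ (Prod.fst '' D) : Set X) ∧
      ∀ p ∈ D, ∀ U ∈ 𝓝 p, ¬ (Prod.snd '' (U ∩ D)).Countable := by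
  obtain ⟨σ, -, hatom, hcirc, hspan⟩ := hT
  have : NullSingletonClass σ := ⟨hatom⟩
  obtain ⟨G, hG, hGm, hGgood⟩ :=
    (ae_forall_measure_image_ne_zero σ (unitEigenpairs T) Prod.snd).exists_measurable_mem
  have hGc : σ Gᶜ = 0 := hG
  refine ⟨unitEigenpairs T ∩ Prod.snd ⁻¹' G, inter_subset_left, ?_, ?_⟩
  · have hA := hspan ({c | ‖c‖ = 1} ∩ G) inter_subset_left
      ((measurableSet_eq_fun measurable_norm measurable_const).inter hGm)
      (by rw [measure_inter_conull hGc, hcirc])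
    refine hA.mono (span_le.2 fun v hv => ?_)
    obtain ⟨c, ⟨hc, hcG⟩, hTv⟩ := mem_iUnion₂.1 hv
    rcases eq_or_ne v 0 with rfl | hv0
    · exact zero_mem _
    have hunit : ((‖v‖ : ℂ)⁻¹ • v, c) ∈ unitEigenpairs T ∩ Prod.snd ⁻¹' G := by
      refine ⟨⟨?_, hc, ?_⟩, hcG⟩
      · rw [norm_smul, norm_inv, Complex.norm_real, norm_norm,
          inv_mul_cancel₀ (norm_ne_zero_iff.2 hv0)]
      · rw [map_smul, show T v = c • v from hTv, smul_comm]
    rw [← smul_inv_smul₀ (by simpa using hv0 : ((‖v‖ : ℝ) : ℂ) ≠ 0) v]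
    exact smul_mem _ _ (subset_span ⟨_, hunit, rfl⟩)
  · rintro p ⟨hpS, hpG⟩ U hU hcount
    refine hGgood _ hpG p hpS rfl U hU ?_
    rw [← measure_inter_conull hGc]
    refine measure_mono_null ?_ (hcount.measure_zero σ)
    rintro _ ⟨⟨q, ⟨hqU, hqS⟩, rfl⟩, hqG⟩
    exact ⟨q, ⟨hqU, hqS, hqG⟩, rfl⟩

end UnitEigenpairs

theorem perfectlySpanning_implies_assumptionH_general
    {X : Type*} [NormedAddCommGroup X] [NormedSpace ℂ X]
    [TopologicalSpace.SeparableSpace X] (hdim : ¬ FiniteDimensional ℂ X)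
    (T : X →L[ℂ] X) (hT : PerfectlySpanning T) :
    ∃ (x : ℕ → X) (lam : ℕ → ℂ) (θ : ℕ → ℝ),
      (∀ n, T (x n) = lam n • x n) ∧
      (∀ n, ‖lam n‖ = 1) ∧
      (∀ n, θ n ∈ Set.Ioc (0 : ℝ) 1) ∧
      (∀ n, lam n = Complex.exp ((2 * Real.pi * θ n : ℝ) * Complex.I)) ∧
      (∀ n, ‖x n‖ = 1) ∧
      (∀ s : Finset ℕ, Set.InjOn lam ↑s →
        (∀ n ∈ s, Irrational (θ n)) ∧ LinearIndependent ℚ (fun n : s => θ (n : ℕ))) ∧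
      Dense (Submodule.span ℂ (Set.range x) : Set X) ∧
      (∀ F : Set ℂ, F.Finite →
        F ⊆ {c : ℂ | ‖c‖ = 1 ∧ ∃ v : X, v ≠ 0 ∧ T v = c • v} →
        closure (Set.range x) = closure (x '' {k : ℕ | lam k ∉ F})) := by
  have : Nontrivial X := not_subsingleton_iff_nontrivial.1 fun _ => hdim inferInstance
  obtain ⟨D, hDS, hDspan, hDperf⟩ := hT.exists_subset_unitEigenpairs
  have hDne : D.Nonempty := by
    by_contra! hD
    obtain ⟨v, hv⟩ := exists_ne (0 : X)
    exact hv (by simpa [hD] using hDspan v)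
  obtain ⟨y, hyD, hycl, hirr, hind⟩ := exists_seq_mapClusterPt_linearIndependent hDne
    (turns ∘ Prod.snd) fun p hp U hU => by
      rw [image_comp]
      exact not_countable_image_turns (image_subset_iff.2 fun q hq => (hDS hq.2).2.1)
        (hDperf p hp U hU)
  have hS n : y n ∈ unitEigenpairs T := hDS (hyD n)
  have hxcl n : MapClusterPt (y n).1 atTop (Prod.fst ∘ y) :=
    (hycl _ (hyD n)).continuousAt_comp continuous_fst.continuousAt
  refine ⟨Prod.fst ∘ y, Prod.snd ∘ y, turns ∘ Prod.snd ∘ y, fun n => (hS n).2.2,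
    fun n => (hS n).2.1, fun n => turns_mem_Ioc _, fun n => (exp_turns (hS n).2.1).symm,
    fun n => (hS n).1, fun s _ => ⟨fun n _ => hirr n, hind.comp _ Subtype.val_injective⟩, ?_,
    fun F hF _ => closure_range_eq_closure_image_compl hxcl
      (hF.preimage (hind.injective.of_comp (f := turns)).injOn)⟩
  refine dense_span_of_subset_closure hDspan (image_subset_iff.2 fun p hp => ?_)
  exact closure_mono (image_subset_range _ _) (mapClusterPt_atTop_iff_forall_mem_closure.1
    ((hycl p hp).continuousAt_comp continuous_fst.continuousAt) 0)

/-- If `T` has a perfectly spanning set of unimodular eigenvectors, then `T`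
satisfies assumption (H): there exist a sequence `(x n)` of unit eigenvectors with
eigenvalues `lam n = exp (2 i π (θ n))`, `θ n ∈ (0, 1]`, such that (1) indices
carrying distinct eigenvalues have ℚ-linearly independent irrational arguments,
(2) the `x n` span a dense subspace, and (3) for any finite set `F` of unimodular
eigenvalues the closure of `{x n : n ≥ 1}` equals the closure of
`{x n : lam n ∉ F}`. -/
theorem perfectlySpanning_implies_assumptionH
    {X : Type*} [NormedAddCommGroup X] [NormedSpace ℂ X] [CompleteSpace X]
    [TopologicalSpace.SeparableSpace X] (hdim : ¬ FiniteDimensional ℂ X)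
    (T : X →L[ℂ] X) (hT : PerfectlySpanning T) :
    ∃ (x : ℕ → X) (lam : ℕ → ℂ) (θ : ℕ → ℝ),
      (∀ n, T (x n) = lam n • x n) ∧
      (∀ n, ‖lam n‖ = 1) ∧
      (∀ n, θ n ∈ Set.Ioc (0 : ℝ) 1) ∧
      (∀ n, lam n = Complex.exp ((2 * Real.pi * θ n : ℝ) * Complex.I)) ∧
      (∀ n, ‖x n‖ = 1) ∧
      (∀ s : Finset ℕ, Set.InjOn lam ↑s →
        (∀ n ∈ s, Irrational (θ n)) ∧ LinearIndependent ℚ (fun n : s => θ (n : ℕ))) ∧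
      Dense (Submodule.span ℂ (Set.range x) : Set X) ∧
      (∀ F : Set ℂ, F.Finite →
        F ⊆ {c : ℂ | ‖c‖ = 1 ∧ ∃ v : X, v ≠ 0 ∧ T v = c • v} →
        closure (Set.range x) = closure (x '' {k : ℕ | lam k ∉ F})) :=
  perfectlySpanning_implies_assumptionH_general hdim T hT
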